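/- Let 𝒜 be a MacLane arrangement, i.e. an arrangement of eight pairwise distinct lines in ℂℙ² with exactly eight triple points and no points of multiplicity ≥ 4, such that each line passes through exactly three triple points. Then any three lines of 𝒜 contain at most seven of the eight triple points; in particular, 𝒜 is not simple C≤3. -/
import Mathlib


/-- We work with the complex projective plane modeled on ℂ³:
points of ℂℙ² are 1-dimensional linear subspaces of ℂ³ and lines are
2-dimensional linear subspaces. -/
abbrev V3 := Fin 3 → ℂ

/-- A point of ℂℙ², viewed as a 1-dimensional subspace of ℂ³. -/
def IsPoint (p : Submodule ℂ V3) : Prop := Module.finrank ℂ p = 1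

/-- A line of ℂℙ², viewed as a 2-dimensional subspace of ℂ³. -/
def IsLine (L : Submodule ℂ V3) : Prop := Module.finrank ℂ L = 2

/-- The multiplicity of a point `p` in the arrangement `A`:
the number of lines of `A` passing through `p`. -/
noncomputable def mult (A : Finset (Submodule ℂ V3)) (p : Submodule ℂ V3) : ℕ :=
  {L | L ∈ A ∧ p ≤ L}.ncard

/-- `nPts A r` is the number `n_r` of points of multiplicity exactly `r` in `A`. -/
noncomputable def nPts (A : Finset (Submodule ℂ V3)) (r : ℕ) : ℕ :=
  {p | IsPoint p ∧ mult A p = r}.ncard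

/-- An arrangement is *simple C≤3* if there are three lines L₁, L₂, L₃ of the
arrangement covering all multiple points (points of multiplicity ≥ 3), and
moreover either L₁ ∩ L₂ ∩ L₃ ≠ ∅, or one of L₁, L₂, L₃ contains at most one
multiple point apart from the pairwise intersection points L₁ ∩ L₂, L₂ ∩ L₃,
L₁ ∩ L₃. -/
def SimpleCle3 (A : Finset (Submodule ℂ V3)) : Prop :=
  ∃ L1 L2 L3, L1 ∈ A ∧ L2 ∈ A ∧ L3 ∈ A ∧
    (∀ p, IsPoint p → 3 ≤ mult A p → p ≤ L1 ∨ p ≤ L2 ∨ p ≤ L3) ∧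
    ((∃ p, IsPoint p ∧ p ≤ L1 ∧ p ≤ L2 ∧ p ≤ L3) ∨
      {p | IsPoint p ∧ 3 ≤ mult A p ∧ p ≤ L1 ∧ ¬ p ≤ L2 ∧ ¬ p ≤ L3}.ncard ≤ 1 ∨
      {p | IsPoint p ∧ 3 ≤ mult A p ∧ p ≤ L2 ∧ ¬ p ≤ L1 ∧ ¬ p ≤ L3}.ncard ≤ 1 ∨
      {p | IsPoint p ∧ 3 ≤ mult A p ∧ p ≤ L3 ∧ ¬ p ≤ L1 ∧ ¬ p ≤ L2}.ncard ≤ 1)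

/-- A MacLane arrangement: eight pairwise distinct lines in ℂℙ² with exactly eight
triple points, no point of multiplicity ≥ 4, and each line passing through exactly
three triple points. -/
def IsMacLane (B : Finset (Submodule ℂ V3)) : Prop :=
  B.card = 8 ∧ (∀ L ∈ B, IsLine L) ∧
  (∀ p, IsPoint p → mult B p ≤ 3) ∧
  nPts B 3 = 8 ∧
  ∀ L ∈ B, {p | IsPoint p ∧ mult B p = 3 ∧ p ≤ L}.ncard = 3

open scoped Classical

/-- Two distinct points lie on at most one line. -/
lemma line_eq_of_two_points {p q L M : Submodule ℂ V3} (hp : IsPoint p) (hq : IsPoint q)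
    (hpq : p ≠ q) (hL : IsLine L) (hM : IsLine M)
    (hpL : p ≤ L) (hqL : q ≤ L) (hpM : p ≤ M) (hqM : q ≤ M) : L = M := by
  have hinf : p ⊓ q < p := by
    rcases lt_or_eq_of_le (inf_le_left : p ⊓ q ≤ p) with h | h
    · exact h
    · exfalso
      apply hpq
      have hle : p ≤ q := by rw [← h]; exact inf_le_right
      exact Submodule.eq_of_le_of_finrank_le hle (by rw [hp, hq])
  have h0 : Module.finrank ℂ ↥(p ⊓ q) = 0 := by
    have := Submodule.finrank_lt_finrank_of_lt hinf
    rw [hp] at this; omega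
  have hsup : Module.finrank ℂ ↥(p ⊔ q) = 2 := by
    have := Submodule.finrank_sup_add_finrank_inf_eq p q
    rw [hp, hq, h0] at this; omega
  have h1 : p ⊔ q = L :=
    Submodule.eq_of_le_of_finrank_le (sup_le hpL hqL) (by rw [hL, hsup])
  have h2 : p ⊔ q = M :=
    Submodule.eq_of_le_of_finrank_le (sup_le hpM hqM) (by rw [hM, hsup])
  rw [← h1, h2]

open scoped Classical

lemma mult_eq_card (A : Finset (Submodule ℂ V3)) (p : Submodule ℂ V3) :
    mult A p = (A.filter fun L => p ≤ L).card := by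
  rw [mult, ← Set.ncard_coe_finset]
  congr 1
  ext L
  simp [Finset.mem_filter]

/-- Core contradiction: if three lines of a MacLane-like arrangement cover all triple
points and some triple point `p0` lies on two of them but not the third, we get `False`. -/
lemma core (A : Finset (Submodule ℂ V3)) (hlines : ∀ L ∈ A, IsLine L)
    (hper : ∀ L ∈ A, {p | IsPoint p ∧ mult A p = 3 ∧ p ≤ L}.ncard = 3)
    (La Lb Lc : Submodule ℂ V3) (ha : La ∈ A) (hb : Lb ∈ A) (hc : Lc ∈ A)
    (hab : La ≠ Lb)
    (cover : ∀ p, IsPoint p → mult A p = 3 → p ≤ La ∨ p ≤ Lb ∨ p ≤ Lc)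
    (p0 : Submodule ℂ V3) (hp0 : IsPoint p0) (hm0 : mult A p0 = 3)
    (h0a : p0 ≤ La) (h0b : p0 ≤ Lb) (h0c : ¬ p0 ≤ Lc) : False := by
  -- find a third line M through p0
  have hcard3 : (A.filter fun L => p0 ≤ L).card = 3 := by
    rw [← mult_eq_card]; exact hm0
  have hsub : ({La, Lb} : Finset (Submodule ℂ V3)) ⊆ A.filter fun L => p0 ≤ L := by
    intro L hL
    simp only [Finset.mem_insert, Finset.mem_singleton] at hL
    rcases hL with rfl | rfl <;> simp [Finset.mem_filter, ha, hb, h0a, h0b]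
  have hcard2 : ({La, Lb} : Finset (Submodule ℂ V3)).card = 2 := by
    rw [Finset.card_insert_of_notMem (by simpa using hab), Finset.card_singleton]
  obtain ⟨M, hMmem, hMnot⟩ : ∃ M ∈ A.filter fun L => p0 ≤ L, M ∉ ({La, Lb} : Finset (Submodule ℂ V3)) := by
    by_contra hcon
    push_neg at hcon
    have : (A.filter fun L => p0 ≤ L) ⊆ ({La, Lb} : Finset (Submodule ℂ V3)) := hcon
    have := Finset.card_le_card this
    omega
  rw [Finset.mem_filter] at hMmem
  obtain ⟨hMA, h0M⟩ := hMmem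
  simp only [Finset.mem_insert, Finset.mem_singleton, not_or] at hMnot
  obtain ⟨hMa, hMb⟩ := hMnot
  have hMc : M ≠ Lc := fun hEq => h0c (hEq ▸ h0M)
  have hMline : IsLine M := hlines M hMA
  have hLaline : IsLine La := hlines La ha
  have hLbline : IsLine Lb := hlines Lb hb
  -- the three triple points on M
  set S : Set (Submodule ℂ V3) := {p | IsPoint p ∧ mult A p = 3 ∧ p ≤ M} with hS
  have hS3 : S.ncard = 3 := hper M hMA
  have hSfin : S.Finite := Set.finite_of_ncard_ne_zero (by omega)
  have hp0S : p0 ∈ hSfin.toFinset := by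
    rw [Set.Finite.mem_toFinset]; exact ⟨hp0, hm0, h0M⟩
  have hScard : hSfin.toFinset.card = 3 := by
    rw [← Set.ncard_eq_toFinset_card _ hSfin]; exact hS3
  have herase : 1 < (hSfin.toFinset.erase p0).card := by
    rw [Finset.card_erase_of_mem hp0S, hScard]
    norm_num
  obtain ⟨q, r, hq, hr, hqr⟩ := Finset.one_lt_card_iff.mp herase
  rw [Finset.mem_erase, Set.Finite.mem_toFinset] at hq hr
  obtain ⟨hqne, hqpt, hqm, hqM⟩ := hq
  obtain ⟨hrne, hrpt, hrm, hrM⟩ := hr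
  -- any other triple point on M must lie on Lc
  have key : ∀ s : Submodule ℂ V3, IsPoint s → mult A s = 3 → s ≤ M → s ≠ p0 → s ≤ Lc := by
    intro s hspt hsm hsM hsne
    rcases cover s hspt hsm with hsa | hsb | hsc
    · exact absurd (line_eq_of_two_points hp0 hspt (Ne.symm hsne) hMline hLaline h0M hsM h0a hsa) hMa
    · exact absurd (line_eq_of_two_points hp0 hspt (Ne.symm hsne) hMline hLbline h0M hsM h0b hsb) hMb
    · exact hsc
  have hqc : q ≤ Lc := key q hqpt hqm hqM hqne
  have hrc : r ≤ Lc := key r hrpt hrm hrM hrne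
  have hLcline : IsLine Lc := hlines Lc hc
  exact hMc (line_eq_of_two_points hqpt hrpt hqr hMline hLcline hqM hrM hqc hrc)

/-- in a MacLane arrangement, any three lines contain at most seven of
the eight triple points; in particular a MacLane arrangement is not simple C≤3. -/
theorem maclane_not_simple_Cle3 (A : Finset (Submodule ℂ V3)) (h : IsMacLane A) :
    (∀ L1 L2 L3, L1 ∈ A → L2 ∈ A → L3 ∈ A →
      {p | IsPoint p ∧ mult A p = 3 ∧ (p ≤ L1 ∨ p ≤ L2 ∨ p ≤ L3)}.ncard ≤ 7) ∧
    ¬ SimpleCle3 A := by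
  classical
  obtain ⟨hcard, hlines, hmult, hn3, hper⟩ := h
  rw [nPts] at hn3
  have hTfin : {p : Submodule ℂ V3 | IsPoint p ∧ mult A p = 3}.Finite :=
    Set.finite_of_ncard_ne_zero (by omega)
  set Tf := hTfin.toFinset with hTf
  have hTmem : ∀ p, p ∈ Tf ↔ IsPoint p ∧ mult A p = 3 := fun p => Set.Finite.mem_toFinset _
  have hTcard : Tf.card = 8 := by
    rw [hTf, ← Set.ncard_eq_toFinset_card _ hTfin]; exact hn3
  have hF : ∀ L ∈ A, (Tf.filter fun p => p ≤ L).card = 3 := by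
    intro L hL
    rw [← Set.ncard_coe_finset]
    have : (↑(Tf.filter fun p => p ≤ L) : Set (Submodule ℂ V3))
        = {p | IsPoint p ∧ mult A p = 3 ∧ p ≤ L} := by
      ext p
      simp only [Finset.coe_filter, Set.mem_setOf_eq, hTmem]
      tauto
    rw [this]
    exact hper L hL
  have part1 : ∀ L1 L2 L3, L1 ∈ A → L2 ∈ A → L3 ∈ A →
      {p | IsPoint p ∧ mult A p = 3 ∧ (p ≤ L1 ∨ p ≤ L2 ∨ p ≤ L3)}.ncard ≤ 7 := by
    intro L1 L2 L3 h1 h2 h3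
    set F1 := Tf.filter fun p => p ≤ L1 with hF1
    set F2 := Tf.filter fun p => p ≤ L2 with hF2
    set F3 := Tf.filter fun p => p ≤ L3 with hF3
    have hUeq : {p | IsPoint p ∧ mult A p = 3 ∧ (p ≤ L1 ∨ p ≤ L2 ∨ p ≤ L3)}
        = ↑(F1 ∪ F2 ∪ F3) := by
      ext p
      simp only [Finset.coe_union, Set.mem_union, Finset.mem_coe, hF1, hF2, hF3,
        Finset.mem_filter, hTmem, Set.mem_setOf_eq]
      tauto
    rw [hUeq, Set.ncard_coe_finset]
    by_contra hgt
    push_neg at hgt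
    have hc1 : F1.card = 3 := hF L1 h1
    have hc2 : F2.card = 3 := hF L2 h2
    have hc3 : F3.card = 3 := hF L3 h3
    have hsubT : F1 ∪ F2 ∪ F3 ⊆ Tf := by
      intro p hp
      simp only [Finset.mem_union, hF1, hF2, hF3, Finset.mem_filter] at hp
      tauto
    have hUcard : (F1 ∪ F2 ∪ F3).card = 8 := by
      have := Finset.card_le_card hsubT
      omega
    have hEq : F1 ∪ F2 ∪ F3 = Tf :=
      Finset.eq_of_subset_of_card_le hsubT (by omega)
    have cover : ∀ p, IsPoint p → mult A p = 3 → p ≤ L1 ∨ p ≤ L2 ∨ p ≤ L3 := by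
      intro p hp hm
      have hpT : p ∈ Tf := (hTmem p).mpr ⟨hp, hm⟩
      rw [← hEq] at hpT
      simp only [Finset.mem_union, hF1, hF2, hF3, Finset.mem_filter] at hpT
      tauto
    -- no triple point lies on all three lines
    have stepA : ∀ p0 ∈ Tf, ¬ (p0 ≤ L1 ∧ p0 ≤ L2 ∧ p0 ≤ L3) := by
      rintro p0 hp0 ⟨ha1, ha2, ha3⟩
      have hm1 : p0 ∈ F1 := by rw [hF1, Finset.mem_filter]; exact ⟨hp0, ha1⟩
      have hm2 : p0 ∈ F2 := by rw [hF2, Finset.mem_filter]; exact ⟨hp0, ha2⟩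
      have hm3 : p0 ∈ F3 := by rw [hF3, Finset.mem_filter]; exact ⟨hp0, ha3⟩
      have hsub2 : F1 ∪ F2 ∪ F3 ⊆ F1 ∪ (F2.erase p0 ∪ F3.erase p0) := by
        intro q hq
        simp only [Finset.mem_union, Finset.mem_erase] at hq ⊢
        by_cases hqp : q = p0
        · subst hqp; tauto
        · tauto
      have hle := Finset.card_le_card hsub2
      have h1' := Finset.card_union_le F1 (F2.erase p0 ∪ F3.erase p0)
      have h2' := Finset.card_union_le (F2.erase p0) (F3.erase p0)
      rw [Finset.card_erase_of_mem hm2, Finset.card_erase_of_mem hm3] at h2'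
      omega
    -- some triple point lies on two of the lines
    have stepB : (∃ p0 ∈ F1, p0 ∈ F2) ∨ (∃ p0 ∈ F1, p0 ∈ F3) ∨ (∃ p0 ∈ F2, p0 ∈ F3) := by
      by_contra hcon
      push_neg at hcon
      obtain ⟨hd12, hd13, hd23⟩ := hcon
      have hdisj12 : Disjoint F1 F2 := Finset.disjoint_left.mpr fun {a} ha ha' => hd12 a ha ha'
      have hdisj3 : Disjoint (F1 ∪ F2) F3 := by
        rw [Finset.disjoint_left]
        intro q hq hq3
        rcases Finset.mem_union.mp hq with hq1 | hq2
        · exact hd13 _ hq1 hq3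
        · exact hd23 _ hq2 hq3
      rw [Finset.card_union_of_disjoint hdisj3, Finset.card_union_of_disjoint hdisj12] at hUcard
      omega
    -- distinctness of the lines involved in the overlap pair
    have hptOf : ∀ p L F', F' = Tf.filter (fun p => p ≤ L) → p ∈ F' →
        IsPoint p ∧ mult A p = 3 ∧ p ≤ L := by
      intro p L F' hF' hp
      rw [hF', Finset.mem_filter, hTmem] at hp
      tauto
    rcases stepB with ⟨p0, hpa, hpb⟩ | ⟨p0, hpa, hpb⟩ | ⟨p0, hpa, hpb⟩
    · obtain ⟨hpt, hm, hle1⟩ := hptOf p0 L1 F1 hF1 hpa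
      obtain ⟨-, -, hle2⟩ := hptOf p0 L2 F2 hF2 hpb
      have hnle3 : ¬ p0 ≤ L3 := fun hle3 =>
        stepA p0 ((hTmem p0).mpr ⟨hpt, hm⟩) ⟨hle1, hle2, hle3⟩
      have hne : L1 ≠ L2 := by
        rintro rfl
        have hb1 := Finset.card_union_le F1 F3
        have hsub' : F1 ∪ F2 ∪ F3 ⊆ F1 ∪ F3 := by
          intro x hx
          simp only [Finset.mem_union, hF1, hF2, Finset.mem_filter] at hx ⊢
          tauto
        have hb2 := Finset.card_le_card hsub'
        omega
      exact core A hlines hper L1 L2 L3 h1 h2 h3 hne cover p0 hpt hm hle1 hle2 hnle3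
    · obtain ⟨hpt, hm, hle1⟩ := hptOf p0 L1 F1 hF1 hpa
      obtain ⟨-, -, hle3⟩ := hptOf p0 L3 F3 hF3 hpb
      have hnle2 : ¬ p0 ≤ L2 := fun hle2 =>
        stepA p0 ((hTmem p0).mpr ⟨hpt, hm⟩) ⟨hle1, hle2, hle3⟩
      have hne : L1 ≠ L3 := by
        rintro rfl
        have hb1 := Finset.card_union_le F1 F2
        have hsub' : F1 ∪ F2 ∪ F3 ⊆ F1 ∪ F2 := by
          intro x hx
          simp only [Finset.mem_union, hF1, hF3, Finset.mem_filter] at hx ⊢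
          tauto
        have hb2 := Finset.card_le_card hsub'
        omega
      exact core A hlines hper L1 L3 L2 h1 h3 h2 hne
        (fun p hp hm' => by rcases cover p hp hm' with h | h | h <;> tauto)
        p0 hpt hm hle1 hle3 hnle2
    · obtain ⟨hpt, hm, hle2⟩ := hptOf p0 L2 F2 hF2 hpa
      obtain ⟨-, -, hle3⟩ := hptOf p0 L3 F3 hF3 hpb
      have hnle1 : ¬ p0 ≤ L1 := fun hle1 =>
        stepA p0 ((hTmem p0).mpr ⟨hpt, hm⟩) ⟨hle1, hle2, hle3⟩
      have hne : L2 ≠ L3 := by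
        rintro rfl
        have hb1 := Finset.card_union_le F1 F2
        have hsub' : F1 ∪ F2 ∪ F3 ⊆ F1 ∪ F2 := by
          intro x hx
          simp only [Finset.mem_union, hF2, hF3, Finset.mem_filter] at hx ⊢
          tauto
        have hb2 := Finset.card_le_card hsub'
        omega
      exact core A hlines hper L2 L3 L1 h2 h3 h1 hne
        (fun p hp hm' => by rcases cover p hp hm' with h | h | h <;> tauto)
        p0 hpt hm hle2 hle3 hnle1
  refine ⟨part1, ?_⟩
  rintro ⟨L1, L2, L3, h1, h2, h3, hcov, -⟩
  have hset : {p | IsPoint p ∧ mult A p = 3 ∧ (p ≤ L1 ∨ p ≤ L2 ∨ p ≤ L3)}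
      = {p | IsPoint p ∧ mult A p = 3} := by
    ext p
    simp only [Set.mem_setOf_eq]
    constructor
    · tauto
    · rintro ⟨hp, hm⟩
      exact ⟨hp, hm, hcov p hp (by omega)⟩
  have := part1 L1 L2 L3 h1 h2 h3
  rw [hset, hn3] at this
  omega
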